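/- arXiv:1304.5153 — 2 statements merged into one kernel-verified Lean document; each statement's English description precedes it below -/
import Mathlib

section
/- Let λ₁, λ₂ > 0 and γ₁, γ₂ ≥ 0. There exist real numbers α₁ ≥ 1 and α₂ ≥ 1 satisfying α₁λ₁ - α₂γ₂ > 0 and α₂λ₂ - α₁γ₁ > 0 if and only if γ₁γ₂ < λ₁λ₂. -/
/-!
Multiplying `α₂γ₂ < α₁λ₁` and `α₁γ₁ < α₂λ₂` (both left sides nonnegative) and cancelling
`α₁α₂ > 0` gives `γ₁γ₂ < λ₁λ₂`. Conversely, for the weights `(λ₂ + γ₂, λ₁ + γ₁)` both margins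
equal `λ₁λ₂ - γ₁γ₂`; the conditions are invariant under positive scaling, and dividing by
`min λ₁ λ₂` pushes both weights above `1`.
-/

theorem mul_lt_mul_of_weighted_gains_lt {lam1 lam2 gam1 gam2 a1 a2 : ℝ}
    (ha1 : 0 < a1) (ha2 : 0 < a2) (hgam1 : 0 ≤ gam1) (hgam2 : 0 ≤ gam2)
    (h1 : a2 * gam2 < a1 * lam1) (h2 : a1 * gam1 < a2 * lam2) :
    gam1 * gam2 < lam1 * lam2 := by
  have hprod : a2 * gam2 * (a1 * gam1) < a1 * lam1 * (a2 * lam2) :=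
    mul_lt_mul'' h1 h2 (by positivity) (by positivity)
  have hpos : 0 < a1 * a2 := mul_pos ha1 ha2
  refine lt_of_mul_lt_mul_left ?_ hpos.le
  linarith

theorem weighted_gains_lt_of_mul_lt {lam1 lam2 gam1 gam2 m : ℝ} (hm : 0 < m)
    (h : gam1 * gam2 < lam1 * lam2) :
    (lam1 + gam1) / m * gam2 < (lam2 + gam2) / m * lam1 ∧
      (lam2 + gam2) / m * gam1 < (lam1 + gam1) / m * lam2 := by
  have hmargin : 0 < (lam1 * lam2 - gam1 * gam2) / m := div_pos (sub_pos.mpr h) hm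
  constructor
  · have : (lam2 + gam2) / m * lam1 - (lam1 + gam1) / m * gam2
        = (lam1 * lam2 - gam1 * gam2) / m := by ring
    linarith
  · have : (lam1 + gam1) / m * lam2 - (lam2 + gam2) / m * gam1
        = (lam1 * lam2 - gam1 * gam2) / m := by ring
    linarith

/-- Small-gain condition: existence of weights `α₁, α₂ ≥ 1` with
`α₁λ₁ > α₂γ₂` and `α₂λ₂ > α₁γ₁` iff `γ₁γ₂ < λ₁λ₂`. -/
theorem small_gain_iff (lam1 lam2 gam1 gam2 : ℝ)
    (hlam1 : 0 < lam1) (hlam2 : 0 < lam2) (hgam1 : 0 ≤ gam1) (hgam2 : 0 ≤ gam2) :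
    (∃ a1 a2 : ℝ, 1 ≤ a1 ∧ 1 ≤ a2 ∧ 0 < a1 * lam1 - a2 * gam2 ∧ 0 < a2 * lam2 - a1 * gam1)
      ↔ gam1 * gam2 < lam1 * lam2 := by
  constructor
  · rintro ⟨a1, a2, ha1, ha2, h1, h2⟩
    exact mul_lt_mul_of_weighted_gains_lt (by linarith) (by linarith) hgam1 hgam2
      (sub_pos.mp h1) (sub_pos.mp h2)
  · intro h
    set m := min lam1 lam2
    have hm : 0 < m := lt_min hlam1 hlam2
    obtain ⟨h1, h2⟩ := weighted_gains_lt_of_mul_lt hm h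
    refine ⟨(lam2 + gam2) / m, (lam1 + gam1) / m, ?_, ?_, sub_pos.mpr h1, sub_pos.mpr h2⟩
    · rw [one_le_div hm]
      linarith [min_le_right lam1 lam2]
    · rw [one_le_div hm]
      linarith [min_le_left lam1 lam2]
end

section
/- Let V : ℝⁿ × ℝⁿ → ℝ≥0 be a bisimulation function for Σ with constants λ > 0, γ ≥ 0. Then for any trajectories x(t), x'(t) with bounded input difference δ = sup_{t≥0}‖u(t) - u'(t)‖, we have limsup_{t→∞} ‖x(t) - x'(t)‖ ≤ (γ/λ)δ. -/
/-! The bisimulation function `W t = V (x t) (x' t)` satisfies the scalar differential inequality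
`W' ≤ -λ W + γ δ` on `[0, ∞)`, so Grönwall's inequality bounds it by a function converging to
`γ δ / λ`; since `‖x - x'‖ ≤ W`, the same bound holds for the limsup of `‖x - x'‖`. -/

open Filter Topology

theorem le_gronwallBound_of_hasDerivAt {f f' : ℝ → ℝ} {K ε a : ℝ}
    (hf : ∀ t, a ≤ t → HasDerivAt f (f' t) t) (bound : ∀ t, a ≤ t → f' t ≤ K * f t + ε)
    {t : ℝ} (ht : a ≤ t) : f t ≤ gronwallBound (f a) K ε (t - a) :=
  le_gronwallBound_of_liminf_deriv_right_le (b := t)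
    (fun s hs => (hf s hs.1).continuousAt.continuousWithinAt)
    (fun s hs _ hr => (hf s hs.1).hasDerivWithinAt.liminf_right_slope_le hr) le_rfl
    (fun s hs => bound s hs.1) t ⟨ht, le_rfl⟩

theorem tendsto_gronwallBound_atTop {δ K ε : ℝ} (hK : K < 0) :
    Tendsto (gronwallBound δ K ε) atTop (𝓝 (-ε / K)) := by
  have hexp : Tendsto (fun t => Real.exp (K * t)) atTop (𝓝 0) :=
    Real.tendsto_exp_atBot.comp (tendsto_id.const_mul_atTop_of_neg hK)
  rw [gronwallBound_of_K_ne_0 hK.ne]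
  convert (hexp.const_mul δ).add ((hexp.sub_const 1).const_mul (ε / K)) using 2
  ring

theorem limsup_le_of_eventually_le_of_tendsto {α : Type*} {l : Filter α} [l.NeBot]
    {f g : α → ℝ} {c : ℝ} (hf : IsBoundedUnder (· ≥ ·) l f) (hfg : f ≤ᶠ[l] g)
    (hg : Tendsto g l (𝓝 c)) : limsup f l ≤ c :=
  (limsup_le_limsup hfg hf.isCoboundedUnder_le hg.isBoundedUnder_le).trans_eq hg.limsup_eq

theorem asymptotic_gain_bound_general (n m : ℕ)
    (V : EuclideanSpace ℝ (Fin n) → EuclideanSpace ℝ (Fin n) → ℝ)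
    (lam gam : ℝ) (hlam : 0 < lam) (hgam : 0 ≤ gam)
    (hVlow : ∀ x x', ‖x - x'‖ ≤ V x x')
    (x x' : ℝ → EuclideanSpace ℝ (Fin n))
    (u u' : ℝ → EuclideanSpace ℝ (Fin m))
    (D : ℝ → ℝ)
    (hD : ∀ t, HasDerivAt (fun s => V (x s) (x' s)) (D t) t)
    (hdecay : ∀ t, 0 ≤ t → D t ≤ -lam * V (x t) (x' t) + gam * ‖u t - u' t‖)
    (δ : ℝ) (hδ : IsLUB {r : ℝ | ∃ s : ℝ, 0 ≤ s ∧ r = ‖u s - u' s‖} δ) :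
    limsup (fun t => ‖x t - x' t‖) atTop ≤ (gam / lam) * δ := by
  have hdecay_δ (t : ℝ) (ht : 0 ≤ t) : D t ≤ -lam * V (x t) (x' t) + gam * δ :=
    (hdecay t ht).trans (by gcongr; exact hδ.1 ⟨t, ht, rfl⟩)
  have hlim : Tendsto (gronwallBound (V (x 0) (x' 0)) (-lam) (gam * δ)) atTop
      (𝓝 (gam / lam * δ)) := by
    convert tendsto_gronwallBound_atTop (neg_neg_of_pos hlam) using 2
    ring
  have hbdd : IsBoundedUnder (· ≥ ·) atTop fun t => ‖x t - x' t‖ :=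
    isBoundedUnder_of_eventually_ge (a := 0) (.of_forall fun _ => norm_nonneg _)
  refine limsup_le_of_eventually_le_of_tendsto hbdd ?_ hlim
  filter_upwards [eventually_ge_atTop 0] with t ht
  simpa using (hVlow _ _).trans (le_gronwallBound_of_hasDerivAt (fun s _ => hD s) hdecay_δ ht)

/-- Asymptotic gain: if `V` is a bisimulation function (lower bound plus derivative
decay along the given pair of trajectories) and the input difference is bounded by
`δ = sup_{t ≥ 0} ‖u t - u' t‖`, then `limsup_{t→∞} ‖x t - x' t‖ ≤ (γ/λ) δ`. -/
theorem asymptotic_gain_bound (n m : ℕ)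
    (V : EuclideanSpace ℝ (Fin n) → EuclideanSpace ℝ (Fin n) → ℝ)
    (lam gam : ℝ) (hlam : 0 < lam) (hgam : 0 ≤ gam)
    (hVnonneg : ∀ x x', 0 ≤ V x x')
    (hVlow : ∀ x x', ‖x - x'‖ ≤ V x x')
    (x x' : ℝ → EuclideanSpace ℝ (Fin n))
    (u u' : ℝ → EuclideanSpace ℝ (Fin m))
    (D : ℝ → ℝ)
    (hD : ∀ t, HasDerivAt (fun s => V (x s) (x' s)) (D t) t)
    (hdecay : ∀ t, 0 ≤ t → D t ≤ -lam * V (x t) (x' t) + gam * ‖u t - u' t‖)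
    (δ : ℝ) (hδ : IsLUB {r : ℝ | ∃ s : ℝ, 0 ≤ s ∧ r = ‖u s - u' s‖} δ) :
    limsup (fun t => ‖x t - x' t‖) atTop ≤ (gam / lam) * δ :=
  asymptotic_gain_bound_general n m V lam gam hlam hgam hVlow x x' u u' D hD hdecay δ hδ
end
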